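/- arXiv:2312.06957 — 2 statements merged into one kernel-verified Lean document; each statement's English description precedes it below -/
import Mathlib

section
/- Suppose a nonnegative real sequence (ξ_t)_{t=1}^{T} satisfies ξ_t ≤ min{A, η_t G²} for all t, where the learning rates satisfy C/η_t = ε + ∑_{τ=1}^{t−1} ξ_τ for constants C > 0, ε > 0, G > 0, A > 0. Then (∑_{t=1}^{T} ξ_t)² ≤ ∑_{t=1}^{T} ξ_t² + 2 ∑_{t=1}^{T} ξ_t (C/η_t − ε) ≤ A² T + 2 G² C T, hence ∑_{t=1}^{T} ξ_t ≤ √((A² + 2G²C) T). -/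
/-!
Since `C / η t - ε = ∑_{τ<t} ξ τ`, the middle expression is exactly the expansion of
`(∑ ξ t)²` into diagonal and (twice the) lower-triangular terms. Termwise, `ξ t² ≤ A²`, and
`ξ t * (C / η t - ε) ≤ ξ t * C / η t ≤ G² C` because `ξ t ≤ η t G²`: the adaptive step size
exactly cancels the growth of the prefix sum.
-/

open Finset

theorem sq_sum_Icc_eq_sum_sq_add_two_mul_sum_mul_prefix {R : Type*} [CommSemiring R]
    (f : ℕ → R) (T : ℕ) :
    (∑ t ∈ Icc 1 T, f t) ^ 2
      = ∑ t ∈ Icc 1 T, f t ^ 2 + 2 * ∑ t ∈ Icc 1 T, f t * ∑ τ ∈ Icc 1 (t - 1), f τ := by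
  induction T with
  | zero => simp
  | succ n ih =>
    simp only [sum_Icc_succ_top (Nat.le_add_left 1 n), Nat.add_sub_cancel]
    rw [add_sq, ih]
    ring

theorem sum_Icc_one_le_mul_of_le {f : ℕ → ℝ} {c : ℝ} {T : ℕ} (h : ∀ t ∈ Icc 1 T, f t ≤ c) :
    ∑ t ∈ Icc 1 T, f t ≤ c * T :=
  calc ∑ t ∈ Icc 1 T, f t ≤ #(Icc 1 T) • c := sum_le_card_nsmul _ _ _ h
    _ = c * T := by simp [mul_comm]

theorem mul_div_sub_le_of_le_mul {ξ η C ε G : ℝ} (hξ : 0 ≤ ξ) (hη : 0 < η) (hC : 0 ≤ C)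
    (hε : 0 ≤ ε) (h : ξ ≤ η * G ^ 2) :
    ξ * (C / η - ε) ≤ G ^ 2 * C :=
  calc ξ * (C / η - ε) ≤ ξ * (C / η) := by gcongr; linarith
    _ ≤ η * G ^ 2 * (C / η) := by gcongr
    _ = G ^ 2 * C := by field_simp

theorem stmt7_general (T : ℕ) (C ε G A : ℝ)
    (hC : 0 < C) (hε : 0 < ε)
    (ξ η : ℕ → ℝ) (hξ0 : ∀ t, 0 ≤ ξ t) (hηpos : ∀ t, 0 < η t)
    (hrate : ∀ t, C / η t = ε + ∑ τ ∈ Finset.Icc 1 (t - 1), ξ τ)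
    (hbound : ∀ t, ξ t ≤ min A (η t * G ^ 2)) :
    (∑ t ∈ Finset.Icc 1 T, ξ t) ^ 2
        ≤ ∑ t ∈ Finset.Icc 1 T, (ξ t) ^ 2
          + 2 * ∑ t ∈ Finset.Icc 1 T, ξ t * (C / η t - ε)
      ∧ ∑ t ∈ Finset.Icc 1 T, (ξ t) ^ 2
          + 2 * ∑ t ∈ Finset.Icc 1 T, ξ t * (C / η t - ε)
            ≤ A ^ 2 * T + 2 * G ^ 2 * C * T
      ∧ ∑ t ∈ Finset.Icc 1 T, ξ t ≤ Real.sqrt ((A ^ 2 + 2 * G ^ 2 * C) * T) := by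
  have hexpand : (∑ t ∈ Icc 1 T, ξ t) ^ 2
      = ∑ t ∈ Icc 1 T, ξ t ^ 2 + 2 * ∑ t ∈ Icc 1 T, ξ t * (C / η t - ε) := by
    simp only [hrate, add_sub_cancel_left]
    exact sq_sum_Icc_eq_sum_sq_add_two_mul_sum_mul_prefix ξ T
  have hdiag : ∑ t ∈ Icc 1 T, ξ t ^ 2 ≤ A ^ 2 * T :=
    sum_Icc_one_le_mul_of_le fun t _ ↦
      pow_le_pow_left₀ (hξ0 t) ((hbound t).trans (min_le_left _ _)) 2
  have hcross : ∑ t ∈ Icc 1 T, ξ t * (C / η t - ε) ≤ G ^ 2 * C * T :=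
    sum_Icc_one_le_mul_of_le fun t _ ↦
      mul_div_sub_le_of_le_mul (hξ0 t) (hηpos t) hC.le hε.le
        ((hbound t).trans (min_le_right _ _))
  have hmiddle : ∑ t ∈ Icc 1 T, ξ t ^ 2 + 2 * ∑ t ∈ Icc 1 T, ξ t * (C / η t - ε)
      ≤ A ^ 2 * T + 2 * G ^ 2 * C * T := by linarith
  refine ⟨hexpand.le, hmiddle, Real.le_sqrt_of_sq_le ?_⟩
  linarith

/-- Adaptive learning rate sum bound: if `ξ_t ≤ min{A, η_t G²}` with
`C/η_t = ε + ∑_{τ<t} ξ_τ`, then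
`(∑ξ_t)² ≤ ∑ξ_t² + 2∑ξ_t(C/η_t − ε) ≤ A²T + 2G²CT`,
hence `∑ξ_t ≤ √((A² + 2G²C)T)`. -/
theorem stmt7 (T : ℕ) (hT : 1 ≤ T) (C ε G A : ℝ)
    (hC : 0 < C) (hε : 0 < ε) (hG : 0 < G) (hA : 0 < A)
    (ξ η : ℕ → ℝ) (hξ0 : ∀ t, 0 ≤ ξ t) (hηpos : ∀ t, 0 < η t)
    (hrate : ∀ t, C / η t = ε + ∑ τ ∈ Finset.Icc 1 (t - 1), ξ τ)
    (hbound : ∀ t, ξ t ≤ min A (η t * G ^ 2)) :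
    (∑ t ∈ Finset.Icc 1 T, ξ t) ^ 2
        ≤ ∑ t ∈ Finset.Icc 1 T, (ξ t) ^ 2
          + 2 * ∑ t ∈ Finset.Icc 1 T, ξ t * (C / η t - ε)
      ∧ ∑ t ∈ Finset.Icc 1 T, (ξ t) ^ 2
          + 2 * ∑ t ∈ Finset.Icc 1 T, ξ t * (C / η t - ε)
            ≤ A ^ 2 * T + 2 * G ^ 2 * C * T
      ∧ ∑ t ∈ Finset.Icc 1 T, ξ t ≤ Real.sqrt ((A ^ 2 + 2 * G ^ 2 * C) * T) :=
  stmt7_general T C ε G A hC hε ξ η hξ0 hηpos hrate hbound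
end

section
/- Adaptive learning rate sum bound for OptIOMDA: if nonnegative residuals δ_t satisfy δ_t ≤ 4 min{√2 D G, η_t G²} and the learning rates are set by (2D² + LP)/η_t = ε + ∑_{τ=1}^{t−1} δ_τ with ε > 0, then (∑_{t=1}^{T} δ_t)² ≤ 32 D² G² T + 8 G² (2D² + LP) T, hence ∑_{t=1}^{T} δ_t ≤ G√(8(6D² + LP) T). -/
/-!
Write `S n = ε + ∑_{t ≤ n} δ t`. The learning-rate rule says `S (t - 1) = (2D² + LP) / η t`, so
the cross term of `S t ² = S (t - 1) ² + 2 S (t - 1) δ t + δ t ²` is at most `8 G² (2D² + LP)` by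
`δ t ≤ 4 η t G²`, while `δ t ² ≤ 32 D² G²`. Summing, `S T ² ≤ ε² + T (32 D² G² + 8 G² (2D² + LP))`,
and `(∑ δ)² ≤ S T ² - ε²` since `ε, δ ≥ 0`.
-/

open Finset

theorem sq_add_sum_Icc_le (ε a b : ℝ) (δ : ℕ → ℝ)
    (hmul : ∀ n, (ε + ∑ t ∈ Icc 1 n, δ t) * δ (n + 1) ≤ a) (hsq : ∀ n, δ (n + 1) ^ 2 ≤ b) :
    ∀ n : ℕ, (ε + ∑ t ∈ Icc 1 n, δ t) ^ 2 ≤ ε ^ 2 + (2 * a + b) * n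
  | 0 => by simp
  | n + 1 => by
    have ih := sq_add_sum_Icc_le ε a b δ hmul hsq n
    rw [sum_Icc_succ_top (by omega)]
    push_cast
    nlinarith [hmul n, hsq n]

theorem sq_sum_Icc_le {ε a b : ℝ} (hε : 0 ≤ ε) {δ : ℕ → ℝ} (hδ : ∀ t, 0 ≤ δ t)
    (hmul : ∀ n, (ε + ∑ t ∈ Icc 1 n, δ t) * δ (n + 1) ≤ a) (hsq : ∀ n, δ (n + 1) ^ 2 ≤ b)
    (n : ℕ) : (∑ t ∈ Icc 1 n, δ t) ^ 2 ≤ (2 * a + b) * n := by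
  have hS : 0 ≤ ∑ t ∈ Icc 1 n, δ t := sum_nonneg fun t _ => hδ t
  nlinarith [sq_add_sum_Icc_le ε a b δ hmul hsq n]

theorem mul_le_of_eq_div {S C η δ k : ℝ} (hS : S = C / η) (hS0 : 0 < S) (hδ : δ ≤ η * k) :
    S * δ ≤ C * k := by
  -- no sign condition on `η` is needed: `η = 0` would force `S = C / 0 = 0`
  have hη : η ≠ 0 := by
    rintro rfl
    rw [div_zero] at hS
    exact hS0.ne' hS
  calc S * δ ≤ S * (η * k) := mul_le_mul_of_nonneg_left hδ hS0.le
    _ = C * k := by rw [hS]; field_simp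

theorem le_mul_sqrt_of_sq_le {x G X : ℝ} (hG : 0 ≤ G) (h : x ^ 2 ≤ G ^ 2 * X) :
    x ≤ G * Real.sqrt X := by
  calc x ≤ Real.sqrt (G ^ 2 * X) := (le_abs_self x).trans (Real.abs_le_sqrt h)
    _ = G * Real.sqrt X := by rw [Real.sqrt_mul (sq_nonneg G), Real.sqrt_sq hG]

theorem stmt16_general (T : ℕ) (D G L P ε : ℝ)
    (hG : 0 < G) (hε : 0 < ε)
    (δ η : ℕ → ℝ) (hδ0 : ∀ t, 0 ≤ δ t)
    (hrate : ∀ t, (2 * D ^ 2 + L * P) / η t = ε + ∑ τ ∈ Finset.Icc 1 (t - 1), δ τ)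
    (hbound : ∀ t, δ t ≤ 4 * min (Real.sqrt 2 * D * G) (η t * G ^ 2)) :
    (∑ t ∈ Finset.Icc 1 T, δ t) ^ 2
        ≤ 32 * D ^ 2 * G ^ 2 * T + 8 * G ^ 2 * (2 * D ^ 2 + L * P) * T
      ∧ ∑ t ∈ Finset.Icc 1 T, δ t
        ≤ G * Real.sqrt (8 * (6 * D ^ 2 + L * P) * T) := by
  set C := 2 * D ^ 2 + L * P
  have hmul : ∀ n, (ε + ∑ t ∈ Icc 1 n, δ t) * δ (n + 1) ≤ C * (4 * G ^ 2) := fun n =>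
    mul_le_of_eq_div (by simpa using (hrate (n + 1)).symm)
      (add_pos_of_pos_of_nonneg hε (sum_nonneg fun t _ => hδ0 t))
      ((hbound _).trans (by linarith [min_le_right (Real.sqrt 2 * D * G) (η (n + 1) * G ^ 2)]))
  have hsq : ∀ n, δ (n + 1) ^ 2 ≤ 32 * D ^ 2 * G ^ 2 := by
    intro n
    have hle : δ (n + 1) ≤ 4 * (Real.sqrt 2 * D * G) :=
      (hbound _).trans (by gcongr; exact min_le_left _ _)
    calc δ (n + 1) ^ 2 ≤ (4 * (Real.sqrt 2 * D * G)) ^ 2 := pow_le_pow_left₀ (hδ0 _) hle 2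
      _ = 32 * D ^ 2 * G ^ 2 := by ring_nf; rw [Real.sq_sqrt zero_le_two]; ring
  have hsum := sq_sum_Icc_le hε.le hδ0 hmul hsq T
  refine ⟨by linarith, le_mul_sqrt_of_sq_le hG.le (by linarith)⟩

/-- Adaptive learning rate sum bound for OptIOMDA:
(∑δ_t)² ≤ 32D²G²T + 8G²(2D²+LP)T, hence ∑δ_t ≤ G√(8(6D²+LP)T). -/
theorem stmt16 (T : ℕ) (hT : 1 ≤ T) (D G L P ε : ℝ)
    (hD : 0 < D) (hG : 0 < G) (hL : 0 < L) (hP : 0 < P) (hε : 0 < ε)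
    (δ η : ℕ → ℝ) (hδ0 : ∀ t, 0 ≤ δ t) (hηpos : ∀ t, 0 < η t)
    (hrate : ∀ t, (2 * D ^ 2 + L * P) / η t = ε + ∑ τ ∈ Finset.Icc 1 (t - 1), δ τ)
    (hbound : ∀ t, δ t ≤ 4 * min (Real.sqrt 2 * D * G) (η t * G ^ 2)) :
    (∑ t ∈ Finset.Icc 1 T, δ t) ^ 2
        ≤ 32 * D ^ 2 * G ^ 2 * T + 8 * G ^ 2 * (2 * D ^ 2 + L * P) * T
      ∧ ∑ t ∈ Finset.Icc 1 T, δ t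
        ≤ G * Real.sqrt (8 * (6 * D ^ 2 + L * P) * T) :=
  stmt16_general T D G L P ε hG hε δ η hδ0 hrate hbound
end
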